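/- (Separability criterion, part 1) With the sequence γ_N defined by the map A_{N+1}=B_{N+1}=A_N − Re(X_N), C_{N+1}=−Im(X_N), X_N = C_N(B_N − iJ)⁻C_Nᵀ: if for some N ≥ 1 one has A_N − iJₙ not positive semidefinite, then γ_0 is not separable (there exist no CMs γ_A, γ_B with γ_0 ≥ γ_A ⊕ γ_B). -/

import Mathlib

open Matrix
open scoped Classical ComplexOrder

noncomputable section

/-- Embed a real matrix into the complex matrices. -/
def toC {k l : ℕ} (A : Matrix (Fin k) (Fin l) ℝ) : Matrix (Fin k) (Fin l) ℂ :=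
  A.map Complex.ofReal

/-- The standard symplectic form `Jₙ = ⊕ₖ [[0,-1],[1,0]]` on `ℝ^{2n}`. -/
def J (n : ℕ) : Matrix (Fin (2*n)) (Fin (2*n)) ℝ :=
  Matrix.of fun i j =>
    if i.val + 1 = j.val ∧ i.val % 2 = 0 then -1
    else if j.val + 1 = i.val ∧ j.val % 2 = 0 then 1 else 0

/-- A correlation matrix (CM): a real symmetric `2n×2n` matrix with `γ - iJₙ ≥ 0`. -/
def IsCM {n : ℕ} (γ : Matrix (Fin (2*n)) (Fin (2*n)) ℝ) : Prop :=
  γ.IsSymm ∧ (toC γ - Complex.I • toC (J n)).PosSemidef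

/-- The operator norm (largest singular value) of a real matrix. -/
def opNorm {n m : ℕ} (C : Matrix (Fin n) (Fin m) ℝ) : ℝ :=
  ‖(Matrix.toEuclideanLin (𝕜 := ℝ) C).toContinuousLinearMap‖

/-- The square root of a positive semidefinite matrix (the former `Matrix.PosSemidef.sqrt`). -/
def psdSqrt {𝕜 : Type*} [RCLike 𝕜] {k : Type*} [Fintype k] [DecidableEq k]
    {A : Matrix k k 𝕜} (hA : A.PosSemidef) : Matrix k k 𝕜 :=
  (hA.1.eigenvectorUnitary : Matrix k k 𝕜) * diagonal ((↑) ∘ Real.sqrt ∘ hA.1.eigenvalues) *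
    (star hA.1.eigenvectorUnitary : Matrix k k 𝕜)

/-- The trace norm (sum of singular values) of a real square matrix. -/
def trNorm {k : ℕ} (A : Matrix (Fin k) (Fin k) ℝ) : ℝ :=
  (psdSqrt (Matrix.posSemidef_conjTranspose_mul_self A)).trace

/-- The trace norm of a complex square matrix. -/
def trNormC {k : ℕ} (A : Matrix (Fin k) (Fin k) ℂ) : ℝ :=
  ((psdSqrt (Matrix.posSemidef_conjTranspose_mul_self A)).trace).re

/-- The Moore–Penrose pseudoinverse of a real matrix. -/
def pinvR {n m : ℕ} (A : Matrix (Fin n) (Fin m) ℝ) : Matrix (Fin m) (Fin n) ℝ :=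
  if h : ∃ B : Matrix (Fin m) (Fin n) ℝ,
      A * B * A = A ∧ B * A * B = B ∧ (A * B)ᵀ = A * B ∧ (B * A)ᵀ = B * A
  then h.choose else 0

/-- The Moore–Penrose pseudoinverse of a complex matrix. -/
def pinvC {n m : ℕ} (A : Matrix (Fin n) (Fin m) ℂ) : Matrix (Fin m) (Fin n) ℂ :=
  if h : ∃ B : Matrix (Fin m) (Fin n) ℂ,
      A * B * A = A ∧ B * A * B = B ∧ (A * B)ᴴ = A * B ∧ (B * A)ᴴ = B * A
  then h.choose else 0

/-- Real part of a complex matrix. -/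
def reM {k l : ℕ} (X : Matrix (Fin k) (Fin l) ℂ) : Matrix (Fin k) (Fin l) ℝ :=
  Matrix.of fun i j => (X i j).re

/-- Imaginary part of a complex matrix. -/
def imM {k l : ℕ} (X : Matrix (Fin k) (Fin l) ℂ) : Matrix (Fin k) (Fin l) ℝ :=
  Matrix.of fun i j => (X i j).im

/-- `X = C (B − iJₘ)⁻ Cᵀ` appearing in the nonlinear map. -/
def Xmap {n m : ℕ} (B : Matrix (Fin (2*m)) (Fin (2*m)) ℝ)
    (C : Matrix (Fin (2*n)) (Fin (2*m)) ℝ) : Matrix (Fin (2*n)) (Fin (2*n)) ℂ :=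
  toC C * pinvC (toC B - Complex.I • toC (J m)) * toC Cᵀ

/-- `A_{N+1} = A_N − Re(X_N)`. -/
def nextA {n m : ℕ} (A : Matrix (Fin (2*n)) (Fin (2*n)) ℝ)
    (B : Matrix (Fin (2*m)) (Fin (2*m)) ℝ) (C : Matrix (Fin (2*n)) (Fin (2*m)) ℝ) :
    Matrix (Fin (2*n)) (Fin (2*n)) ℝ :=
  A - reM (Xmap B C)

/-- `C_{N+1} = −Im(X_N)`. -/
def nextC {n m : ℕ} (B : Matrix (Fin (2*m)) (Fin (2*m)) ℝ)
    (C : Matrix (Fin (2*n)) (Fin (2*m)) ℝ) : Matrix (Fin (2*n)) (Fin (2*n)) ℝ :=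
  - imM (Xmap B C)

/-- CM predicate for a bipartite block-indexed real matrix, w.r.t. `Jₙ ⊕ Jₘ`. -/
def IsCM2 {n m : ℕ} (γ : Matrix (Fin (2*n) ⊕ Fin (2*m)) (Fin (2*n) ⊕ Fin (2*m)) ℝ) : Prop :=
  γ.IsSymm ∧ (γ.map Complex.ofReal -
    Complex.I • (fromBlocks (J n) 0 0 (J m)).map Complex.ofReal).PosSemidef

/-- Separability of a bipartite CM: `γ ≥ γ_A ⊕ γ_B` for some CMs `γ_A, γ_B`. -/
def SepCM {n m : ℕ} (γ : Matrix (Fin (2*n) ⊕ Fin (2*m)) (Fin (2*n) ⊕ Fin (2*m)) ℝ) : Prop :=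
  ∃ (γA : Matrix (Fin (2*n)) (Fin (2*n)) ℝ) (γB : Matrix (Fin (2*m)) (Fin (2*m)) ℝ),
    IsCM γA ∧ IsCM γB ∧ (γ - fromBlocks γA 0 0 γB).PosSemidef

/-- The block matrix `[[A, C],[Cᵀ, A]]` built from the pair `(A, C)`. -/
def γmat {n : ℕ} (p : Matrix (Fin (2*n)) (Fin (2*n)) ℝ × Matrix (Fin (2*n)) (Fin (2*n)) ℝ) :
    Matrix (Fin (2*n) ⊕ Fin (2*n)) (Fin (2*n) ⊕ Fin (2*n)) ℝ :=
  fromBlocks p.1 p.2 p.2ᵀ p.1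

/-- The iterated sequence: `seq A0 B0 C0 N = (A_{N+1}, C_{N+1})`; the map gives `0`
whenever the current matrix is not a CM. -/
def seq {n m : ℕ} (A0 : Matrix (Fin (2*n)) (Fin (2*n)) ℝ)
    (B0 : Matrix (Fin (2*m)) (Fin (2*m)) ℝ) (C0 : Matrix (Fin (2*n)) (Fin (2*m)) ℝ) :
    ℕ → Matrix (Fin (2*n)) (Fin (2*n)) ℝ × Matrix (Fin (2*n)) (Fin (2*n)) ℝ
  | 0 => if IsCM2 (fromBlocks A0 C0 C0ᵀ B0) then (nextA A0 B0 C0, nextC B0 C0) else (0, 0)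
  | (N+1) => if IsCM2 (γmat (seq A0 B0 C0 N)) then
      (nextA (seq A0 B0 C0 N).1 (seq A0 B0 C0 N).1 (seq A0 B0 C0 N).2,
       nextC (seq A0 B0 C0 N).1 (seq A0 B0 C0 N).2)
    else (0, 0)

/-!
Suppose `γ₀ ≥ γ_A ⊕ γ_B` with `γ_A, γ_B` CMs. By induction every `γ_N = [[A, C], [Cᵀ, A]]` of the
sequence satisfies `A - γ_A + iC ≥ 0`. Adding `0 ⊕ (γ_B - iJ) ≥ 0` to
`γ₀ - γ_A ⊕ γ_B` (first step), or `0 ⊕ (γ_A - iJ) ≥ 0` to `γ_N - γ_A ⊕ γ_A` (later steps), gives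
`[[A - γ_A, C], [Cᵀ, B - iJ]] ≥ 0`. Its Schur complement `A - γ_A - C (B - iJ)⁻ Cᵀ` is
`A' - γ_A + iC'`, and it stays positive semidefinite although `Q = B - iJ` may be singular, since the
Moore–Penrose inverse `Q⁻` is Hermitian with `Q⁻ Q Q⁻ = Q⁻`. The same block matrix shows
`A - iJ ≥ 0` for every `N`, against the hypothesis.
-/

namespace Matrix

variable {α β R : Type*} [Fintype α] [Fintype β]

def IsMoorePenroseInverse [Semiring R] [StarRing R] (A : Matrix α β R) (B : Matrix β α R) :
    Prop :=
  A * B * A = A ∧ B * A * B = B ∧ (A * B)ᴴ = A * B ∧ (B * A)ᴴ = B * A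

namespace IsMoorePenroseInverse

variable [Semiring R] [StarRing R] {A : Matrix α β R} {B C : Matrix β α R}

theorem conjTranspose (h : IsMoorePenroseInverse A B) : IsMoorePenroseInverse Aᴴ Bᴴ := by
  obtain ⟨h1, h2, h3, h4⟩ := h
  refine ⟨?_, ?_, ?_, ?_⟩
  · rw [← conjTranspose_mul, ← conjTranspose_mul, ← Matrix.mul_assoc, h1]
  · rw [← conjTranspose_mul, ← conjTranspose_mul, ← Matrix.mul_assoc, h2]
  · rw [← conjTranspose_mul, h4, h4]
  · rw [← conjTranspose_mul, h3, h3]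

theorem unique (hB : IsMoorePenroseInverse A B) (hC : IsMoorePenroseInverse A C) : B = C := by
  obtain ⟨hB1, hB2, hB3, hB4⟩ := hB
  obtain ⟨hC1, hC2, hC3, hC4⟩ := hC
  have hAB : A * B = A * C := by
    calc A * B = (A * C * A * B)ᴴ := by rw [hC1, hB3]
    _ = (A * B)ᴴ * (A * C)ᴴ := by simp only [conjTranspose_mul, Matrix.mul_assoc]
    _ = A * C := by rw [hB3, hC3, ← Matrix.mul_assoc, hB1]
  have hBA : B * A = C * A := by
    calc B * A = (B * A * C * A)ᴴ := by
          rw [Matrix.mul_assoc (B * A), Matrix.mul_assoc B, ← Matrix.mul_assoc A, hC1, hB4]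
    _ = (C * A)ᴴ * (B * A)ᴴ := by simp only [conjTranspose_mul, Matrix.mul_assoc]
    _ = C * A := by rw [hB4, hC4, Matrix.mul_assoc, ← Matrix.mul_assoc A, hB1]
  calc B = C * A * B := by rw [← hBA, hB2]
  _ = C := by rw [Matrix.mul_assoc, hAB, ← Matrix.mul_assoc, hC2]

end IsMoorePenroseInverse

theorem PosSemidef.map_ofReal {M : Matrix α α ℝ} (hM : M.PosSemidef) :
    (M.map Complex.ofReal).PosSemidef := by
  obtain ⟨k, v, rfl⟩ := posSemidef_iff_eq_sum_vecMulVec.mp hM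
  have h : (∑ i, vecMulVec (v i) (star (v i))).map Complex.ofReal =
      ∑ i, vecMulVec (fun j => (v i j : ℂ)) (star (fun j => (v i j : ℂ))) := by
    ext a b
    simp [sum_apply, vecMulVec_apply]
  rw [h]
  exact posSemidef_sum _ fun i _ => posSemidef_vecMulVec_self_star _

theorem PosSemidef.fromBlocks_zero [CommRing R] [PartialOrder R] [StarRing R]
    [IsOrderedAddMonoid R] {D₁ : Matrix α α R} {D₂ : Matrix β β R}
    (h₁ : D₁.PosSemidef) (h₂ : D₂.PosSemidef) : (fromBlocks D₁ 0 0 D₂).PosSemidef := by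
  refine .of_dotProduct_mulVec_nonneg (h₁.isHermitian.fromBlocks (by simp) h₂.isHermitian) ?_
  intro x
  rw [← Sum.elim_comp_inl_inr x, fromBlocks_mulVec, Function.star_sumElim,
    sumElim_dotProduct_sumElim]
  simpa using
    add_nonneg (h₁.dotProduct_mulVec_nonneg (x ∘ Sum.inl)) (h₂.dotProduct_mulVec_nonneg (x ∘ Sum.inr))

theorem PosSemidef.sub_mul_mul_conjTranspose_of_fromBlocks [CommRing R] [PartialOrder R]
    [StarRing R] [StarOrderedRing R] {P : Matrix α α R} {C : Matrix α β R} {Q B : Matrix β β R}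
    (hB : Bᴴ = B) (hBQB : B * Q * B = B) (hM : (fromBlocks P C Cᴴ Q).PosSemidef) :
    (P - C * B * Cᴴ).PosSemidef := by
  classical
  let L : Matrix (α ⊕ β) (α ⊕ β) R := fromBlocks 1 0 (-(B * Cᴴ)) 1
  have hBQB' : B * (Q * (B * Cᴴ)) = B * Cᴴ := by
    simpa only [Matrix.mul_assoc] using congrArg (· * Cᴴ) hBQB
  have hLML : Lᴴ * fromBlocks P C Cᴴ Q * L =
      fromBlocks (P - C * B * Cᴴ) (C - C * (B * Q)) (Cᴴ - Q * (B * Cᴴ)) Q := by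
    simp only [L, fromBlocks_conjTranspose, conjTranspose_neg, conjTranspose_mul, hB,
      conjTranspose_conjTranspose, conjTranspose_one, conjTranspose_zero, fromBlocks_multiply]
    congr 1 <;>
      simp only [Matrix.one_mul, Matrix.mul_one, Matrix.zero_mul, Matrix.mul_zero,
        Matrix.neg_mul, Matrix.mul_neg, Matrix.add_mul, zero_add, Matrix.mul_assoc, hBQB'] <;>
      abel
  have h := hM.conjTranspose_mul_mul_same L
  rw [hLML] at h
  exact h.submatrix Sum.inl

theorem posSemidef_fromBlocks_of_add_sub_I_smul {P K : Matrix α α ℂ}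
    (h₁ : (P + Complex.I • K).PosSemidef) (h₂ : (P - Complex.I • K).PosSemidef) :
    (fromBlocks P K (-K) P).PosSemidef := by
  classical
  let T : Matrix (α ⊕ α) (α ⊕ α) ℂ := fromBlocks 1 (-(Complex.I • 1)) 1 (Complex.I • 1)
  have hTDT : Tᴴ * fromBlocks (P + Complex.I • K) 0 0 (P - Complex.I • K) * T =
      (2 : ℂ) • fromBlocks P K (-K) P := by
    simp only [T, fromBlocks_conjTranspose, conjTranspose_neg, conjTranspose_smul,
      conjTranspose_one, Complex.star_def, Complex.conj_I, fromBlocks_multiply, fromBlocks_smul]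
    congr 1 <;>
      simp only [Matrix.one_mul, Matrix.mul_one, Matrix.mul_zero,
        Matrix.neg_mul, Matrix.mul_neg, Matrix.smul_mul, Matrix.mul_smul, add_zero, zero_add,
        smul_add, smul_sub, smul_smul, Complex.I_mul_I, smul_neg, neg_smul, one_smul, neg_neg,
        two_smul] <;>
      abel
  have h := ((h₁.fromBlocks_zero h₂).conjTranspose_mul_mul_same T).smul
    (a := (2⁻¹ : ℂ)) (by positivity)
  rwa [hTDT, smul_smul, inv_mul_cancel₀ two_ne_zero, one_smul] at h

end Matrix

section CorrelationMatrices

variable {k l : ℕ}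

theorem isMoorePenroseInverse_pinvC {A : Matrix (Fin k) (Fin l) ℂ}
    (h : ∃ B, A.IsMoorePenroseInverse B) : A.IsMoorePenroseInverse (pinvC A) := by
  unfold pinvC
  split_ifs with h'
  · exact h'.choose_spec
  · exact absurd h h'

theorem pinvC_of_not_exists {A : Matrix (Fin k) (Fin l) ℂ}
    (h : ¬∃ B, A.IsMoorePenroseInverse B) : pinvC A = 0 := by
  unfold pinvC
  split_ifs with h'
  · exact absurd h' h
  · rfl

theorem pinvC_mul_mul_pinvC (A : Matrix (Fin k) (Fin l) ℂ) :
    pinvC A * A * pinvC A = pinvC A := by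
  by_cases h : ∃ B, A.IsMoorePenroseInverse B
  · exact (isMoorePenroseInverse_pinvC h).2.1
  · simp [pinvC_of_not_exists h]

theorem conjTranspose_pinvC {Q : Matrix (Fin k) (Fin k) ℂ} (hQ : Qᴴ = Q) :
    (pinvC Q)ᴴ = pinvC Q := by
  by_cases h : ∃ B, Q.IsMoorePenroseInverse B
  · have hQ' := (isMoorePenroseInverse_pinvC h).conjTranspose
    rw [hQ] at hQ'
    exact hQ'.unique (isMoorePenroseInverse_pinvC h)
  · simp [pinvC_of_not_exists h]

theorem conjTranspose_toC (A : Matrix (Fin k) (Fin l) ℝ) : (toC A)ᴴ = toC Aᵀ := by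
  ext i j
  simp [toC]

theorem toC_transpose (A : Matrix (Fin k) (Fin l) ℝ) : toC Aᵀ = (toC A)ᵀ := rfl

theorem toC_neg (A : Matrix (Fin k) (Fin l) ℝ) : toC (-A) = -toC A := by
  ext i j
  simp [toC]

theorem transpose_J (k : ℕ) : (_root_.J k)ᵀ = -_root_.J k := by
  ext i j
  simp only [transpose_apply, Matrix.neg_apply, _root_.J, of_apply]
  split_ifs <;> first | omega | norm_num

theorem conjTranspose_toC_sub_I_smul_J {A : Matrix (Fin (2 * k)) (Fin (2 * k)) ℝ}
    (hA : A.IsSymm) :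
    (toC A - Complex.I • toC (_root_.J k))ᴴ = toC A - Complex.I • toC (_root_.J k) := by
  rw [conjTranspose_sub, conjTranspose_smul, conjTranspose_toC, conjTranspose_toC, hA.eq,
    transpose_J, toC_neg, Complex.star_def, Complex.conj_I, neg_smul, smul_neg, neg_neg]

theorem conjTranspose_Xmap {B : Matrix (Fin (2 * l)) (Fin (2 * l)) ℝ} (hB : B.IsSymm)
    (C : Matrix (Fin (2 * k)) (Fin (2 * l)) ℝ) : (Xmap B C)ᴴ = Xmap B C := by
  rw [Xmap, conjTranspose_mul, conjTranspose_mul, conjTranspose_pinvC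
    (conjTranspose_toC_sub_I_smul_J hB), conjTranspose_toC, conjTranspose_toC,
    transpose_transpose, Matrix.mul_assoc]

theorem transpose_reM {X : Matrix (Fin k) (Fin k) ℂ} (hX : Xᴴ = X) : (reM X)ᵀ = reM X := by
  ext i j
  simp [reM, ← congrFun (congrFun hX i) j]

theorem transpose_imM {X : Matrix (Fin k) (Fin k) ℂ} (hX : Xᴴ = X) : (imM X)ᵀ = -imM X := by
  ext i j
  simp [imM, ← congrFun (congrFun hX i) j]

theorem toC_sub_reM_add_I_smul_neg_imM (A : Matrix (Fin k) (Fin k) ℝ)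
    (X : Matrix (Fin k) (Fin k) ℂ) : toC (A - reM X) + Complex.I • toC (-imM X) = toC A - X := by
  ext i j
  simp only [toC, reM, imM, map_apply, Matrix.sub_apply, Matrix.add_apply, Matrix.smul_apply,
    Matrix.neg_apply, of_apply, smul_eq_mul]
  push_cast
  linear_combination -Complex.re_add_im (X i j)

end CorrelationMatrices

/-- For real symmetric `A` and antisymmetric `C`, `A - γA + iC ≥ 0` is equivalent to
`[[A, C], [Cᵀ, A]] ≥ γA ⊕ γA`. -/
def Dominates {n : ℕ} (γA : Matrix (Fin (2*n)) (Fin (2*n)) ℝ)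
    (p : Matrix (Fin (2*n)) (Fin (2*n)) ℝ × Matrix (Fin (2*n)) (Fin (2*n)) ℝ) : Prop :=
  p.1.IsSymm ∧ p.2ᵀ = -p.2 ∧ (toC p.1 - toC γA + Complex.I • toC p.2).PosSemidef

section Dominates

variable {n m : ℕ} {γA A C : Matrix (Fin (2*n)) (Fin (2*n)) ℝ}

theorem Dominates.sub_I_smul (hγA : γA.IsSymm) (h : Dominates γA (A, C)) :
    (toC A - toC γA - Complex.I • toC C).PosSemidef := by
  obtain ⟨hA, hC, hpos⟩ := h
  have h := hpos.transpose
  rwa [transpose_add, transpose_sub, transpose_smul, ← toC_transpose, ← toC_transpose,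
    ← toC_transpose, hA.eq, hγA.eq, hC, toC_neg, smul_neg, ← sub_eq_add_neg] at h

theorem Dominates.isCM2_γmat (hγA : IsCM γA) (h : Dominates γA (A, C)) : IsCM2 (γmat (A, C)) := by
  refine ⟨isSymm_fromBlocks_iff.mpr ⟨h.1, rfl, transpose_transpose C, h.1⟩, ?_⟩
  have hblocks : (γmat (A, C)).map Complex.ofReal -
      Complex.I • (fromBlocks (_root_.J n) 0 0 (_root_.J n)).map Complex.ofReal =
      fromBlocks (toC A - Complex.I • toC (_root_.J n)) (toC C) (-toC C)
        (toC A - Complex.I • toC (_root_.J n)) := by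
    ext (i | i) (j | j) <;> simp [γmat, toC, h.2.1]
  rw [hblocks]
  refine posSemidef_fromBlocks_of_add_sub_I_smul ?_ ?_
  · convert h.2.2.add hγA.2 using 1
    abel
  · convert (h.sub_I_smul hγA.1).add hγA.2 using 1
    abel

theorem Dominates.posSemidef_fromBlocks (hγA : IsCM γA) (h : Dominates γA (A, C)) :
    (fromBlocks (toC A - toC γA) (toC C) (toC C)ᴴ
      (toC A - Complex.I • toC (_root_.J n))).PosSemidef := by
  have hskew := posSemidef_fromBlocks_of_add_sub_I_smul h.2.2 (h.sub_I_smul hγA.1)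
  convert hskew.add ((PosSemidef.zero (n := Fin (2*n))).fromBlocks_zero hγA.2) using 1
  rw [fromBlocks_add, conjTranspose_toC, h.2.1, toC_neg]
  congr 1 <;> abel

theorem dominates_next {A : Matrix (Fin (2*n)) (Fin (2*n)) ℝ}
    {B : Matrix (Fin (2*m)) (Fin (2*m)) ℝ} {C : Matrix (Fin (2*n)) (Fin (2*m)) ℝ}
    (hA : A.IsSymm) (hB : B.IsSymm)
    (h : (fromBlocks (toC A - toC γA) (toC C) (toC C)ᴴ
      (toC B - Complex.I • toC (_root_.J m))).PosSemidef) :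
    Dominates γA (nextA A B C, nextC B C) := by
  have hX := conjTranspose_Xmap hB C
  dsimp only [Dominates, nextA, nextC]
  refine ⟨?_, ?_, ?_⟩
  · rw [IsSymm, transpose_sub, hA.eq, transpose_reM hX]
  · rw [transpose_neg, transpose_imM hX]
  · have hschur := h.sub_mul_mul_conjTranspose_of_fromBlocks
      (conjTranspose_pinvC (conjTranspose_toC_sub_I_smul_J hB)) (pinvC_mul_mul_pinvC _)
    rw [conjTranspose_toC] at hschur
    rwa [sub_add_eq_add_sub, toC_sub_reM_add_I_smul_neg_imM, sub_right_comm]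

theorem Dominates.next (hγA : IsCM γA) (h : Dominates γA (A, C)) :
    Dominates γA (nextA A A C, nextC A C) :=
  dominates_next h.1 h.1 (h.posSemidef_fromBlocks hγA)

theorem dominates_next_of_le_fromBlocks {A0 : Matrix (Fin (2*n)) (Fin (2*n)) ℝ}
    {B0 γB : Matrix (Fin (2*m)) (Fin (2*m)) ℝ} {C0 : Matrix (Fin (2*n)) (Fin (2*m)) ℝ}
    (hA0 : A0.IsSymm) (hB0 : B0.IsSymm) (hγB : IsCM γB)
    (hsep : (fromBlocks A0 C0 C0ᵀ B0 - fromBlocks γA 0 0 γB).PosSemidef) :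
    Dominates γA (nextA A0 B0 C0, nextC B0 C0) := by
  refine dominates_next hA0 hB0 ?_
  convert hsep.map_ofReal.add ((PosSemidef.zero (n := Fin (2*n))).fromBlocks_zero hγB.2) using 1
  ext (i | i) (j | j) <;> simp [toC]

end Dominates

/-- Theorem 1, part 1: if for some `N ≥ 1` the block `A_N` satisfies
`A_N − iJₙ ≱ 0`, then `γ_0` is not separable.  (`(seq A0 B0 C0 N).1 = A_{N+1}`.) -/
theorem criterion_inseparable {n m : ℕ}
    (A0 : Matrix (Fin (2*n)) (Fin (2*n)) ℝ) (B0 : Matrix (Fin (2*m)) (Fin (2*m)) ℝ)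
    (C0 : Matrix (Fin (2*n)) (Fin (2*m)) ℝ)
    (hγ0 : IsCM2 (Matrix.fromBlocks A0 C0 C0ᵀ B0))
    (hN : ∃ N : ℕ, ¬ (toC (seq A0 B0 C0 N).1 - Complex.I • toC (J n)).PosSemidef) :
    ¬ SepCM (Matrix.fromBlocks A0 C0 C0ᵀ B0) := by
  rintro ⟨γA, γB, hγA, hγB, hsep⟩
  obtain ⟨N, hN⟩ := hN
  obtain ⟨hA0, -, -, hB0⟩ := isSymm_fromBlocks_iff.mp hγ0.1
  have hdom : ∀ N, Dominates γA (seq A0 B0 C0 N) := by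
    intro N
    induction N with
    | zero =>
      rw [seq, if_pos hγ0]
      exact dominates_next_of_le_fromBlocks hA0 hB0 hγB hsep
    | succ k ih =>
      rw [seq, if_pos (ih.isCM2_γmat hγA)]
      exact ih.next hγA
  exact hN (((hdom N).posSemidef_fromBlocks hγA).submatrix Sum.inr)
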